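/- For every positive integer k, every nonnull graph in G_k has a k-simplicial vertex, i.e., a vertex whose neighborhood is a union of k (possibly empty) cliques. -/
import Mathlib


open SimpleGraph

namespace PaperSep

variable {V : Type} {W : Type}

/-- There is a walk from `a` to `b` in `G` all of whose vertices avoid the set `S`. -/
def ConnAvoid (G : SimpleGraph V) (S : Set V) (a b : V) : Prop :=
  ∃ p : G.Walk a b, ∀ v ∈ p.support, v ∉ S

/-- `S` is an `(a,b)`-separator of `G`. -/
def IsSep (G : SimpleGraph V) (a b : V) (S : Set V) : Prop :=
  a ∉ S ∧ b ∉ S ∧ ¬ ConnAvoid G S a b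

/-- `S` is a minimal `(a,b)`-separator of `G`. -/
def IsMinSep (G : SimpleGraph V) (a b : V) (S : Set V) : Prop :=
  IsSep G a b S ∧ ∀ T ⊂ S, ¬ IsSep G a b T

/-- `S` is a minimal separator of `G`. -/
def IsMinimalSeparator (G : SimpleGraph V) (S : Set V) : Prop :=
  ∃ a b : V, a ≠ b ∧ ¬ G.Adj a b ∧ IsMinSep G a b S

/-- `K` is a cutset of `G`, i.e. `G − K` is disconnected. -/
def IsCutset (G : SimpleGraph V) (K : Set V) : Prop :=
  ∃ a b : V, a ∉ K ∧ b ∉ K ∧ ¬ ConnAvoid G K a b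

/-- `K` is a minimal cutset of `G`. -/
def IsMinimalCutset (G : SimpleGraph V) (K : Set V) : Prop :=
  IsCutset G K ∧ ∀ T ⊂ K, ¬ IsCutset G T

/-- A class of finite graphs. -/
def GraphClass : Type 1 :=
  ∀ (α : Type) [Finite α], SimpleGraph α → Prop

/-- A class is hereditary if it is closed under isomorphism and induced subgraphs. -/
def Hereditary (C : GraphClass) : Prop :=
  ∀ (α : Type) [Finite α] (G : SimpleGraph α) (β : Type) [Finite β] (H : SimpleGraph β)
    (s : Set α), Nonempty (H ≃g G.induce s) → C α G → C β H

/-- `G ∈ 𝒢_C` : every minimal separator of `G` induces a graph in `C`. -/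
def MemGC (C : GraphClass) {α : Type} [Finite α] (G : SimpleGraph α) : Prop :=
  ∀ S : Set α, IsMinimalSeparator G S → C ↥S (G.induce S)

/-- The class `𝒢_C`. -/
def GCclass (C : GraphClass) : GraphClass :=
  fun α inst G => @MemGC C α inst G

/-- `S` is a union of `k` (possibly empty) cliques of `G`. -/
def UnionOfCliques (G : SimpleGraph V) (k : ℕ) (S : Set V) : Prop :=
  ∃ f : Fin k → Set V, (∀ i, G.IsClique (f i)) ∧ S = ⋃ i, f i

/-- `G ∈ 𝒢_k` : every minimal separator of `G` is a union of `k` cliques. -/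
def MemGk (k : ℕ) (G : SimpleGraph V) : Prop :=
  ∀ S : Set V, IsMinimalSeparator G S → UnionOfCliques G k S

/-- The class `𝒢_k`. -/
def Gkclass (k : ℕ) : GraphClass := fun _ _ G => MemGk k G

/-- The class `𝒞_k` of graphs whose vertex set is a union of `k` cliques. -/
def Ckclass (k : ℕ) : GraphClass := fun _ _ G => UnionOfCliques G k Set.univ

/-- An induced minor model of `H` in `G`. -/
def IsIMModel (G : SimpleGraph V) (H : SimpleGraph W) (X : W → Set V) : Prop :=
  (∀ w, (X w).Nonempty) ∧
  (∀ u w : W, u ≠ w → Disjoint (X u) (X w)) ∧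
  (∀ w, (G.induce (X w)).Connected) ∧
  (∀ u w : W, u ≠ w → (H.Adj u w ↔ ∃ a ∈ X u, ∃ b ∈ X w, G.Adj a b))

/-- `H` is an induced minor of `G`. -/
def IsInducedMinor (H : SimpleGraph W) (G : SimpleGraph V) : Prop :=
  ∃ X : W → Set V, IsIMModel G H X

/-- The class `C` is closed under induced minors. -/
def IMClosed (C : GraphClass) : Prop :=
  ∀ (α : Type) [Finite α] (G : SimpleGraph α) (β : Type) [Finite β] (H : SimpleGraph β),
    C α G → IsInducedMinor H G → C β H

/-- The class `C` is closed under the addition of edges. -/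
def EdgeAddClosed (C : GraphClass) : Prop :=
  ∀ (α : Type) [Finite α] (G : SimpleGraph α) (a b : α), a ≠ b → ¬ G.Adj a b →
    C α G → C α (G ⊔ SimpleGraph.edge a b)

/-- `G ∈ ℳ_C` : `G ∉ C` but every proper induced minor of `G` is in `C`.
(For finite graphs, the proper induced minors of `G` are exactly the induced minors of `G`
not isomorphic to `G`.) -/
def MemMC (C : GraphClass) {α : Type} [Finite α] (G : SimpleGraph α) : Prop :=
  ¬ C α G ∧
  ∀ (β : Type) [Finite β] (H : SimpleGraph β),
    IsInducedMinor H G → IsEmpty (H ≃g G) → C β H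

/-- The complete join of two graphs. -/
def join (G : SimpleGraph V) (H : SimpleGraph W) : SimpleGraph (V ⊕ W) :=
  SimpleGraph.fromRel (fun x y =>
    match x, y with
    | Sum.inl a, Sum.inl b => G.Adj a b
    | Sum.inr a, Sum.inr b => H.Adj a b
    | _, _ => True)

/-- The class `C` is closed under the addition of universal vertices (up to isomorphism). -/
def UnivAddClosed (C : GraphClass) : Prop :=
  ∀ (α : Type) [Finite α] (G : SimpleGraph α) (β : Type) [Finite β] (H : SimpleGraph β),
    C α G → Nonempty (H ≃g join (⊥ : SimpleGraph (Fin 1)) G) → C β H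

/-- `G` has a universal vertex. -/
def HasUniversalVertex (G : SimpleGraph V) : Prop :=
  ∃ v : V, ∀ w : V, w ≠ v → G.Adj v w



/-- `G` is a theta: two nonadjacent vertices joined by three internally disjoint induced
paths of length at least two, with no other vertices or edges
(equivalently, a subdivision of `K_{2,3}`). -/
def IsTheta (G : SimpleGraph V) : Prop :=
  ∃ (a b : V) (P₁ P₂ P₃ : G.Walk a b),
    a ≠ b ∧
    P₁.IsPath ∧ P₂.IsPath ∧ P₃.IsPath ∧
    2 ≤ P₁.length ∧ 2 ≤ P₂.length ∧ 2 ≤ P₃.length ∧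
    (∀ v : V, v ∈ P₁.support → v ∈ P₂.support → v = a ∨ v = b) ∧
    (∀ v : V, v ∈ P₁.support → v ∈ P₃.support → v = a ∨ v = b) ∧
    (∀ v : V, v ∈ P₂.support → v ∈ P₃.support → v = a ∨ v = b) ∧
    (∀ v : V, v ∈ P₁.support ∨ v ∈ P₂.support ∨ v ∈ P₃.support) ∧
    (∀ u v : V, G.Adj u v ↔
      s(u, v) ∈ P₁.edges ∨ s(u, v) ∈ P₂.edges ∨ s(u, v) ∈ P₃.edges)

/-- `G` is a pyramid: an apex `a` joined to a triangle `b₁b₂b₃` by three paths sharing only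
`a`, at least two of which have length at least two, with no other vertices or edges. -/
def IsPyramid (G : SimpleGraph V) : Prop :=
  ∃ (a b₁ b₂ b₃ : V) (P₁ : G.Walk a b₁) (P₂ : G.Walk a b₂) (P₃ : G.Walk a b₃),
    G.Adj b₁ b₂ ∧ G.Adj b₁ b₃ ∧ G.Adj b₂ b₃ ∧
    P₁.IsPath ∧ P₂.IsPath ∧ P₃.IsPath ∧
    1 ≤ P₁.length ∧ 1 ≤ P₂.length ∧ 1 ≤ P₃.length ∧
    ((2 ≤ P₁.length ∧ 2 ≤ P₂.length) ∨ (2 ≤ P₁.length ∧ 2 ≤ P₃.length) ∨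
      (2 ≤ P₂.length ∧ 2 ≤ P₃.length)) ∧
    (∀ v : V, v ∈ P₁.support → v ∈ P₂.support → v = a) ∧
    (∀ v : V, v ∈ P₁.support → v ∈ P₃.support → v = a) ∧
    (∀ v : V, v ∈ P₂.support → v ∈ P₃.support → v = a) ∧
    (∀ v : V, v ∈ P₁.support ∨ v ∈ P₂.support ∨ v ∈ P₃.support) ∧
    (∀ u v : V, G.Adj u v ↔
      s(u, v) ∈ P₁.edges ∨ s(u, v) ∈ P₂.edges ∨ s(u, v) ∈ P₃.edges ∨
      s(u, v) = s(b₁, b₂) ∨ s(u, v) = s(b₁, b₃) ∨ s(u, v) = s(b₂, b₃))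

/-- `G` is a prism: two disjoint triangles joined by three pairwise disjoint paths, with no
other vertices or edges. -/
def IsPrism (G : SimpleGraph V) : Prop :=
  ∃ (a₁ a₂ a₃ b₁ b₂ b₃ : V) (P₁ : G.Walk a₁ b₁) (P₂ : G.Walk a₂ b₂) (P₃ : G.Walk a₃ b₃),
    G.Adj a₁ a₂ ∧ G.Adj a₁ a₃ ∧ G.Adj a₂ a₃ ∧
    G.Adj b₁ b₂ ∧ G.Adj b₁ b₃ ∧ G.Adj b₂ b₃ ∧
    P₁.IsPath ∧ P₂.IsPath ∧ P₃.IsPath ∧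
    1 ≤ P₁.length ∧ 1 ≤ P₂.length ∧ 1 ≤ P₃.length ∧
    (∀ v : V, v ∈ P₁.support → v ∈ P₂.support → False) ∧
    (∀ v : V, v ∈ P₁.support → v ∈ P₃.support → False) ∧
    (∀ v : V, v ∈ P₂.support → v ∈ P₃.support → False) ∧
    (∀ v : V, v ∈ P₁.support ∨ v ∈ P₂.support ∨ v ∈ P₃.support) ∧
    (∀ u v : V, G.Adj u v ↔
      s(u, v) ∈ P₁.edges ∨ s(u, v) ∈ P₂.edges ∨ s(u, v) ∈ P₃.edges ∨
      s(u, v) = s(a₁, a₂) ∨ s(u, v) = s(a₁, a₃) ∨ s(u, v) = s(a₂, a₃) ∨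
      s(u, v) = s(b₁, b₂) ∨ s(u, v) = s(b₁, b₃) ∨ s(u, v) = s(b₂, b₃))

/-- `G` is a long prism: a prism other than the complement of `C₆`, i.e. a prism in which at
least one of the three paths has length at least two. -/
def IsLongPrism (G : SimpleGraph V) : Prop :=
  ∃ (a₁ a₂ a₃ b₁ b₂ b₃ : V) (P₁ : G.Walk a₁ b₁) (P₂ : G.Walk a₂ b₂) (P₃ : G.Walk a₃ b₃),
    G.Adj a₁ a₂ ∧ G.Adj a₁ a₃ ∧ G.Adj a₂ a₃ ∧
    G.Adj b₁ b₂ ∧ G.Adj b₁ b₃ ∧ G.Adj b₂ b₃ ∧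
    P₁.IsPath ∧ P₂.IsPath ∧ P₃.IsPath ∧
    1 ≤ P₁.length ∧ 1 ≤ P₂.length ∧ 1 ≤ P₃.length ∧
    (2 ≤ P₁.length ∨ 2 ≤ P₂.length ∨ 2 ≤ P₃.length) ∧
    (∀ v : V, v ∈ P₁.support → v ∈ P₂.support → False) ∧
    (∀ v : V, v ∈ P₁.support → v ∈ P₃.support → False) ∧
    (∀ v : V, v ∈ P₂.support → v ∈ P₃.support → False) ∧
    (∀ v : V, v ∈ P₁.support ∨ v ∈ P₂.support ∨ v ∈ P₃.support) ∧
    (∀ u v : V, G.Adj u v ↔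
      s(u, v) ∈ P₁.edges ∨ s(u, v) ∈ P₂.edges ∨ s(u, v) ∈ P₃.edges ∨
      s(u, v) = s(a₁, a₂) ∨ s(u, v) = s(a₁, a₃) ∨ s(u, v) = s(a₂, a₃) ∨
      s(u, v) = s(b₁, b₂) ∨ s(u, v) = s(b₁, b₃) ∨ s(u, v) = s(b₂, b₃))

/-- `G` is a wheel: a hole (chordless cycle of length at least four) together with one
additional vertex having at least three neighbors on the hole. -/
def IsWheel (G : SimpleGraph V) : Prop :=
  ∃ (v x : V) (c : G.Walk x x),
    c.IsCycle ∧ 4 ≤ c.length ∧ v ∉ c.support ∧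
    (∀ u : V, u = v ∨ u ∈ c.support) ∧
    (∀ u w : V, u ∈ c.support → w ∈ c.support → G.Adj u w → s(u, w) ∈ c.edges) ∧
    3 ≤ {u : V | u ∈ c.support ∧ G.Adj v u}.ncard

/-- `G` is a broken wheel: a wheel in which the neighbors of the additional vertex induce a
disconnected subgraph of the hole. -/
def IsBrokenWheel (G : SimpleGraph V) : Prop :=
  ∃ (v x : V) (c : G.Walk x x),
    c.IsCycle ∧ 4 ≤ c.length ∧ v ∉ c.support ∧
    (∀ u : V, u = v ∨ u ∈ c.support) ∧
    (∀ u w : V, u ∈ c.support → w ∈ c.support → G.Adj u w → s(u, w) ∈ c.edges) ∧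
    3 ≤ {u : V | u ∈ c.support ∧ G.Adj v u}.ncard ∧
    ¬ (G.induce {u : V | u ∈ c.support ∧ G.Adj v u}).Connected

/-- `G` is diamond-free: it has no induced subgraph isomorphic to `K₄` minus an edge. -/
def DiamondFree (G : SimpleGraph V) : Prop :=
  ¬ ∃ a b c d : V, c ≠ d ∧ G.Adj a b ∧ G.Adj a c ∧ G.Adj a d ∧ G.Adj b c ∧ G.Adj b d ∧
    ¬ G.Adj c d

/-- The short `n`-prism: two `n`-vertex cliques joined by a perfect matching. -/
def completePrism (n : ℕ) : SimpleGraph (Fin n ⊕ Fin n) :=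
  SimpleGraph.fromRel (fun x y =>
    match x, y with
    | Sum.inl _, Sum.inl _ => True
    | Sum.inr _, Sum.inr _ => True
    | Sum.inl i, Sum.inr j => i = j
    | Sum.inr i, Sum.inl j => i = j)

/-- `G` is a complete prism, i.e. a short `n`-prism for some `n ≥ 3`. -/
def IsCompletePrism (G : SimpleGraph V) : Prop :=
  ∃ n : ℕ, 3 ≤ n ∧ Nonempty (G ≃g completePrism n)

/-- `G` is a cycle. -/
def IsCycleGraph (G : SimpleGraph V) : Prop :=
  ∃ n : ℕ, 3 ≤ n ∧ Nonempty (G ≃g cycleGraph n)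

/-- `G` is a complete graph. -/
def IsCompleteGraph (G : SimpleGraph V) : Prop :=
  ∀ u v : V, u ≠ v → G.Adj u v

/-- `G` has a clique-cutset. -/
def HasCliqueCutset (G : SimpleGraph V) : Prop :=
  ∃ K : Set V, G.IsClique K ∧ IsCutset G K



section Aux

variable {G : SimpleGraph V} {S T : Set V} {a b c x y z : V}

lemma connAvoid_refl (h : a ∉ S) : ConnAvoid G S a a :=
  ⟨SimpleGraph.Walk.nil, by simp [h]⟩

lemma ConnAvoid.notMem_left (h : ConnAvoid G S a b) : a ∉ S := by
  obtain ⟨p, hp⟩ := h; exact hp a p.start_mem_support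

lemma ConnAvoid.notMem_right (h : ConnAvoid G S a b) : b ∉ S := by
  obtain ⟨p, hp⟩ := h; exact hp b p.end_mem_support

lemma ConnAvoid.symm (h : ConnAvoid G S a b) : ConnAvoid G S b a := by
  obtain ⟨p, hp⟩ := h
  exact ⟨p.reverse, fun v hv => hp v (by simpa using hv)⟩

lemma ConnAvoid.trans (h : ConnAvoid G S a b) (h' : ConnAvoid G S b c) : ConnAvoid G S a c := by
  obtain ⟨p, hp⟩ := h; obtain ⟨q, hq⟩ := h'
  refine ⟨p.append q, fun v hv => ?_⟩
  rcases (SimpleGraph.Walk.mem_support_append_iff p q).1 hv with h | h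
  · exact hp v h
  · exact hq v h

lemma ConnAvoid.step (h : ConnAvoid G S a c) (hadj : G.Adj c z) (hz : z ∉ S) :
    ConnAvoid G S a z :=
  h.trans ⟨SimpleGraph.Walk.cons hadj SimpleGraph.Walk.nil, by
    simp [h.notMem_right, hz]⟩

lemma connAvoid_of_mem_support {p : G.Walk a b} (hp : ∀ v ∈ p.support, v ∉ S)
    (hv : z ∈ p.support) : ConnAvoid G S a z := by
  classical
  exact ⟨p.takeUntil z hv, fun u hu => hp u (p.support_takeUntil_subset hv hu)⟩

lemma IsSep.symm' (h : IsSep G a b S) : IsSep G b a S :=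
  ⟨h.2.1, h.1, fun hc => h.2.2 hc.symm⟩

lemma IsMinSep.symm' (h : IsMinSep G a b S) : IsMinSep G b a S :=
  ⟨h.1.symm', fun T hT hsep => h.2 T hT hsep.symm'⟩

lemma exists_isMinSep_subset [Finite V] (h : IsSep G a b S) : ∃ T ⊆ S, IsMinSep G a b T := by
  have hwf : WellFounded ((· < ·) : Set V → Set V → Prop) := Finite.to_wellFoundedLT.wf
  obtain ⟨T, hT, hmin⟩ := hwf.has_min {T | T ⊆ S ∧ IsSep G a b T} ⟨S, le_refl _, h⟩
  exact ⟨T, hT.1, hT.2, fun T' hT' hsep => hmin T' ⟨hT'.subset.trans hT.1, hsep⟩ hT'⟩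

lemma IsMinSep.exists_adj {s : V} (h : IsMinSep G a b S) (hs : s ∈ S) :
    ∃ c, ConnAvoid G S a c ∧ G.Adj c s := by
  classical
  have hss : S \ {s} ⊂ S := Set.sdiff_singleton_ssubset.mpr hs
  have hnsep := h.2 _ hss
  have ha : a ∉ S \ {s} := fun hc => h.1.1 hc.1
  have hb : b ∉ S \ {s} := fun hc => h.1.2.1 hc.1
  have hconn : ConnAvoid G (S \ {s}) a b := by
    by_contra hc; exact hnsep ⟨ha, hb, hc⟩
  obtain ⟨p, hp⟩ := hconn
  have hsupS : ∀ v ∈ p.support, v ∈ S → v = s := by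
    intro v hv hvS
    by_contra hne
    exact hp v hv ⟨hvS, hne⟩
  have hsp : s ∈ p.support := by
    by_contra hsp
    exact h.1.2.2 ⟨p, fun v hv hvS => hsp ((hsupS v hv hvS) ▸ hv)⟩
  have hsa : s ≠ a := fun hc => h.1.1 (hc ▸ hs)
  obtain ⟨w, hadj, r, hqr⟩ := SimpleGraph.Walk.exists_eq_cons_of_ne hsa (p.takeUntil s hsp).reverse
  have hcount : (p.takeUntil s hsp).support.count s = 1 :=
    p.count_support_takeUntil_eq_one hsp
  have hsr : s ∉ r.support := by
    have h1 : (p.takeUntil s hsp).reverse.support.count s = 1 := by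
      rw [SimpleGraph.Walk.support_reverse, List.count_reverse]; exact hcount
    rw [hqr, SimpleGraph.Walk.support_cons, List.count_cons_self] at h1
    intro hc
    have := List.count_pos_iff.mpr hc
    omega
  refine ⟨w, ⟨r.reverse, ?_⟩, hadj.symm⟩
  intro v hv hvS
  have hvr : v ∈ r.support := by simpa using hv
  have hvq : v ∈ (p.takeUntil s hsp).support := by
    rw [← List.mem_reverse, ← SimpleGraph.Walk.support_reverse, hqr,
      SimpleGraph.Walk.support_cons]
    exact List.mem_cons_of_mem _ hvr
  have hvp : v ∈ p.support := p.support_takeUntil_subset hsp hvq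
  have := hsupS v hvp hvS
  exact hsr (this ▸ hvr)

lemma stay {p : G.Walk x z} :
    (∀ v ∈ p.support, v ∉ T) → ConnAvoid G S a x → (∀ v, ConnAvoid G T x v → v ∉ S) →
    ConnAvoid G S a z := by
  induction p with
  | nil => exact fun _ hx _ => hx
  | @cons u w _ hadj q ih =>
    intro h1 h2 h3
    have hxT : u ∉ T := h1 u (by simp)
    have hwT : w ∉ T := h1 w (by simp)
    have hxw : ConnAvoid G T u w := (connAvoid_refl hxT).step hadj hwT
    exact ih (fun v hv => h1 v (by simp [hv])) (h2.step hadj (h3 w hxw))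
      (fun v hv => h3 v (hxw.trans hv))

end Aux


/-- for every positive integer `k`, every nonnull graph in `𝒢_k` has a
`k`-simplicial vertex, i.e. a vertex whose neighborhood is a union of `k` cliques. -/
theorem statement_12 (k : ℕ) (hk : 1 ≤ k) (V : Type) [Finite V] [Nonempty V]
    (G : SimpleGraph V) (hG : MemGk k G) :
    ∃ v : V, UnionOfCliques G k (G.neighborSet v) := by
  classical
  have z0 : Fin k := ⟨0, hk⟩
  by_cases hcomp : ∀ u v : V, u ≠ v → G.Adj u v
  · obtain ⟨v⟩ := ‹Nonempty V›
    refine ⟨v, fun i => if i = z0 then G.neighborSet v else ∅, fun i => ?_, ?_⟩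
    · dsimp only; split
      · exact fun u hu w hw hne => hcomp u w hne
      · simp
    · ext t
      simp only [Set.mem_iUnion]
      constructor
      · intro ht; exact ⟨z0, by simp [ht]⟩
      · rintro ⟨i, hi⟩
        by_cases h : i = z0 <;> simp [h] at hi
        exact hi
  · push_neg at hcomp
    obtain ⟨a0, b0, hne0, hnadj0⟩ := hcomp
    have hS0 : IsSep G a0 b0 {t | t ≠ a0 ∧ t ≠ b0} := by
      refine ⟨by simp, by simp, ?_⟩
      rintro ⟨p, hp⟩
      cases p with
      | nil => exact hne0 rfl
      | @cons _ w _ hadj q =>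
        have hw : w ∈ (SimpleGraph.Walk.cons hadj q).support := by
          rw [SimpleGraph.Walk.support_cons]
          exact List.mem_cons_of_mem _ q.start_mem_support
        have hmem := hp w hw
        simp only [Set.mem_setOf_eq, not_and, not_not] at hmem
        rcases Classical.em (w = a0) with h | h
        · exact G.irrefl (h ▸ hadj)
        · exact hnadj0 ((hmem h) ▸ hadj)
    obtain ⟨S1, -, hmin1⟩ := exists_isMinSep_subset hS0
    set P : ℕ → Prop := fun n => ∃ a b S, a ≠ b ∧ ¬G.Adj a b ∧ IsMinSep G a b S ∧
      ({t | ConnAvoid G S a t}).ncard = n with hP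
    have hPne : {n | P n}.Nonempty := ⟨_, a0, b0, S1, hne0, hnadj0, hmin1, rfl⟩
    obtain ⟨a, b, S, hab, hnadj, hminS, hCm⟩ := Nat.sInf_mem hPne
    set C : Set V := {t | ConnAvoid G S a t} with hCdef
    have haS : a ∉ S := hminS.1.1
    have haC : ConnAvoid G S a a := connAvoid_refl haS
    -- Key claim: C is a clique, complete to S.
    have key : ∀ x y : V, ConnAvoid G S a x → (ConnAvoid G S a y ∨ y ∈ S) → x ≠ y →
        G.Adj x y := by
      intro x y hx hy hxyne
      by_contra hxy
      have hNsep : IsSep G x y (G.neighborSet x) := by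
        refine ⟨by simp, by simpa using hxy, ?_⟩
        rintro ⟨p, hp⟩
        cases p with
        | nil => exact hxyne rfl
        | @cons _ w _ hadj q =>
          have hw : w ∈ (SimpleGraph.Walk.cons hadj q).support := by
            rw [SimpleGraph.Walk.support_cons]
            exact List.mem_cons_of_mem _ q.start_mem_support
          exact hp w hw hadj
      obtain ⟨T, hTN, hminT⟩ := exists_isMinSep_subset hNsep
      have hyT : y ∉ T := fun hc => hxy (hTN hc)
      have hxT : x ∉ T := hminT.1.1
      have hTCS : ∀ v ∈ T, ConnAvoid G S a v ∨ v ∈ S := by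
        intro v hv
        by_cases hvS : v ∈ S
        · exact Or.inr hvS
        · exact Or.inl (hx.step (hTN hv) hvS)
      have hDT : ∀ v, ConnAvoid G S b v → v ∉ T := by
        intro v hv hvT
        rcases hTCS v hvT with h | h
        · exact hminS.1.2.2 (h.trans hv.symm)
        · exact hv.notMem_right h
      have hreroute : ∀ d, ConnAvoid G S b d → ConnAvoid G T b d := by
        rintro d ⟨p, hp⟩
        exact ⟨p, fun v hv _ => hDT v (connAvoid_of_mem_support hp hv) ‹_›⟩
      have hbS : ∀ s ∈ S, s ∉ T → ConnAvoid G T b s := by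
        intro s hsS hsT
        obtain ⟨d, hd, hadj⟩ := hminS.symm'.exists_adj hsS
        exact (hreroute d hd).step hadj hsT
      by_cases hCx : ∃ s ∈ S, ConnAvoid G T x s
      · obtain ⟨s, hsS, hxs⟩ := hCx
        rcases hy with hyC | hyS
        · -- y ∈ C
          by_cases hCy : ∃ s' ∈ S, ConnAvoid G T y s'
          · obtain ⟨s', hs'S, hys⟩ := hCy
            exact hminT.1.2.2
              ((hxs.trans ((hbS s hsS hxs.notMem_right).symm.trans
                (hbS s' hs'S hys.notMem_right))).trans hys.symm)
          · push_neg at hCy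
            have hCyC : ∀ t, ConnAvoid G T y t → ConnAvoid G S a t := by
              rintro t ⟨p, hp⟩
              exact stay hp hyC (fun v hv hvS => hCy v hvS hv)
            have hxCy : ¬ ConnAvoid G T y x := fun hc => hminT.1.2.2 hc.symm
            have hss : {t | ConnAvoid G T y t} ⊂ C :=
              HasSubset.Subset.ssubset_of_ne (fun t ht => hCyC t ht)
                (fun hc => hxCy ((Set.ext_iff.mp hc x).mpr hx))
            have hlt : ({t | ConnAvoid G T y t}).ncard < C.ncard := Set.ncard_lt_ncard hss
            have hle : sInf {n | P n} ≤ ({t | ConnAvoid G T y t}).ncard :=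
              Nat.sInf_le ⟨y, x, T, hxyne.symm, fun h => hxy h.symm, hminT.symm', rfl⟩
            omega
        · -- y ∈ S
          exact hminT.1.2.2
            (hxs.trans ((hbS s hsS hxs.notMem_right).symm.trans (hbS y hyS hyT)))
      · push_neg at hCx
        have hCxC : ∀ t, ConnAvoid G T x t → ConnAvoid G S a t := by
          rintro t ⟨p, hp⟩
          exact stay hp hx (fun v hv hvS => hCx v hvS hv)
        rcases hy with hyC | hyS
        · -- y ∈ C, Cx ⊂ C
          have hyCx : ¬ ConnAvoid G T x y := hminT.1.2.2
          have hss : {t | ConnAvoid G T x t} ⊂ C :=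
            HasSubset.Subset.ssubset_of_ne (fun t ht => hCxC t ht)
              (fun hc => hyCx ((Set.ext_iff.mp hc y).mpr hyC))
          have hlt : ({t | ConnAvoid G T x t}).ncard < C.ncard := Set.ncard_lt_ncard hss
          have hle : sInf {n | P n} ≤ ({t | ConnAvoid G T x t}).ncard :=
            Nat.sInf_le ⟨x, y, T, hxyne, hxy, hminT, rfl⟩
          omega
        · -- y ∈ S, Cx = C
          have hsub : {t | ConnAvoid G T x t} ⊆ C := fun t ht => hCxC t ht
          have hle : sInf {n | P n} ≤ ({t | ConnAvoid G T x t}).ncard :=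
            Nat.sInf_le ⟨x, y, T, hxyne, hxy, hminT, rfl⟩
          have heq : {t | ConnAvoid G T x t} = C :=
            Set.eq_of_subset_of_ncard_le hsub (by omega)
          obtain ⟨c, hc, hcy⟩ := hminS.exists_adj hyS
          have hcCx : ConnAvoid G T x c := (Set.ext_iff.mp heq c).mpr hc
          exact hminT.1.2.2 (hcCx.step hcy hyT)
    -- now conclude: N(a) = (C \ {a}) ∪ S
    obtain ⟨f, hfclique, hfS⟩ := hG S ⟨a, b, hab, hnadj, hminS⟩
    have hfsub : ∀ j, f j ⊆ S := fun j => hfS ▸ Set.subset_iUnion f j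
    have hNa : G.neighborSet a = (C \ {a}) ∪ S := by
      ext t
      constructor
      · intro ht
        have hadj : G.Adj a t := ht
        by_cases htS : t ∈ S
        · exact Or.inr htS
        · exact Or.inl ⟨haC.step hadj htS, fun h => G.irrefl (h ▸ hadj)⟩
      · rintro (⟨htC, hta⟩ | htS)
        · exact key a t haC (Or.inl htC) (fun h => hta h.symm)
        · exact key a t haC (Or.inr htS) (fun h => haS (h ▸ htS))
    refine ⟨a, fun i => if i = z0 then f z0 ∪ (C \ {a}) else f i, fun i => ?_, ?_⟩
    · dsimp only; split
      · intro u hu w hw hne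
        rcases hu with hu | hu <;> rcases hw with hw | hw
        · exact hfclique z0 hu hw hne
        · exact (key w u hw.1 (Or.inr (hfsub z0 hu))
            (fun h => hw.1.notMem_right (h ▸ hfsub z0 hu))).symm
        · exact key u w hu.1 (Or.inr (hfsub z0 hw))
            (fun h => hu.1.notMem_right (h ▸ hfsub z0 hw))
        · exact key u w hu.1 (Or.inl hw.1) hne
      · exact hfclique i
    · rw [hNa]
      ext t
      simp only [Set.mem_iUnion]
      constructor
      · rintro (ht | ht)
        · exact ⟨z0, by simp [ht]⟩
        · have : t ∈ ⋃ i, f i := hfS ▸ ht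
          obtain ⟨i, hi⟩ := Set.mem_iUnion.1 this
          by_cases h : i = z0
          · exact ⟨z0, by simp [h ▸ hi]⟩
          · exact ⟨i, by simp [h, hi]⟩
      · rintro ⟨i, hi⟩
        by_cases h : i = z0
        · rw [h, if_pos rfl] at hi
          rcases hi with hi | hi
          · exact Or.inr (hfsub z0 hi)
          · exact Or.inl hi
        · rw [if_neg h] at hi
          exact Or.inr (hfsub i hi)


end PaperSep
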